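/- arXiv:1206.0430 — 9 statements merged into one kernel-verified Lean document; each statement's English description precedes it below -/
import Mathlib

section
/- In a GCGWE with homogeneous resources, at any pure Nash equilibrium X, the congestion level of every player n satisfies Σ_{m: X_m = X_n} S_{m,n} ≤ (Σ_{m=1}^N S_{m,n}) / |R_n|. -/
open Finset

/-- In a GCGWE with homogeneous resources, at any pure Nash equilibrium `X`,
the congestion level of every player `n` is at most `(∑ m, S m n) / |R_n|`. -/
theorem stmt1 (N : ℕ) (R : Type) [DecidableEq R]
    (S : Fin N → Fin N → ℝ)
    (hSnonneg : ∀ m n, 0 ≤ S m n) (hSdiag : ∀ n, S n n = 0)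
    (Rn : Fin N → Finset R) (hRn : ∀ n, (Rn n).Nonempty)
    (f : Fin N → ℝ → ℝ) (hf : ∀ n, StrictAnti (f n))
    (X : Fin N → R) (hX : ∀ n, X n ∈ Rn n)
    (hNE : ∀ n, ∀ r ∈ Rn n,
      f n (∑ m ∈ univ.filter (fun m => Function.update X n r m = r), S m n) ≤
        f n (∑ m ∈ univ.filter (fun m => X m = X n), S m n)) :
    ∀ n, (∑ m ∈ univ.filter (fun m => X m = X n), S m n) ≤
      (∑ m, S m n) / (Rn n).card := by
  intro n
  have hc : (0:ℝ) < (Rn n).card := by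
    exact_mod_cast Finset.card_pos.mpr (hRn n)
  rw [le_div_iff₀ hc]
  set L := ∑ m ∈ univ.filter (fun m => X m = X n), S m n with hL
  have key : ∀ r ∈ Rn n, L ≤ ∑ m ∈ univ.filter (fun m => X m = r), S m n := by
    intro r hr
    have h1 := (hf n).le_iff_ge.mp (hNE n r hr)
    refine h1.trans ?_
    have hzero : ∀ (t : Finset (Fin N)), ∑ m ∈ t, S m n = ∑ m ∈ t.erase n, S m n := by
      intro t
      by_cases hn : n ∈ t
      · rw [← Finset.add_sum_erase t _ hn, hSdiag, zero_add]
      · rw [Finset.erase_eq_of_notMem hn]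
    rw [hzero (univ.filter (fun m => Function.update X n r m = r)),
        hzero (univ.filter (fun m => X m = r))]
    apply Finset.sum_le_sum_of_subset_of_nonneg
    · intro m hm
      simp only [Finset.mem_erase, Finset.mem_filter] at *
      obtain ⟨hmn, _, hupd⟩ := hm
      refine ⟨hmn, Finset.mem_univ m, ?_⟩
      rwa [Function.update_of_ne hmn] at hupd
    · intro m _ _; exact hSnonneg m n
  have h2 : L * (Rn n).card = ∑ _r ∈ Rn n, L := by
    rw [Finset.sum_const, nsmul_eq_mul, mul_comm]
  rw [h2]
  calc ∑ _r ∈ Rn n, L ≤ ∑ r ∈ Rn n, ∑ m ∈ univ.filter (fun m => X m = r), S m n :=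
        Finset.sum_le_sum key
    _ ≤ ∑ m, S m n := by
        rw [← Finset.sum_biUnion]
        · apply Finset.sum_le_sum_of_subset_of_nonneg (Finset.subset_univ _)
          intro m _ _; exact hSnonneg m n
        · intro r₁ _ r₂ _ hne
          simp only [Finset.disjoint_left, Finset.mem_filter]
          rintro m ⟨_, h1⟩ ⟨_, h2⟩
          exact hne (h1 ▸ h2 ▸ rfl)
end

section
/- Consider a GCGWE with homogeneous resources on an undirected graph (S symmetric). Define the total congestion C(X) = Σ_{n=1}^N Σ_{m: X_m = X_n} S_{m,n}. If state Y results from state X by a single better response update of some player n (so all other players keep their resources and n strictly decreases its own congestion), then C(Y) < C(X); in fact C(Y) = C(X) + 2(c_n(Y) − c_n(X)), where c_n(Z) = Σ_{m: Z_m = Z_n} S_{m,n}. -/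
open Finset

/-- Congestion level of player `n` in state `Z`. -/
def cong {N : ℕ} {R : Type} [DecidableEq R]
    (S : Fin N → Fin N → ℝ) (Z : Fin N → R) (n : Fin N) : ℝ :=
  ∑ m ∈ univ.filter (fun m => Z m = Z n), S m n

/-- Total congestion of a state. -/
def totalCong {N : ℕ} {R : Type} [DecidableEq R]
    (S : Fin N → Fin N → ℝ) (Z : Fin N → R) : ℝ :=
  ∑ n, cong S Z n

/-- For a GCGWE with homogeneous resources on an undirected graph (symmetric `S`),
a single better response update of player `n` strictly decreases the total
congestion; more precisely `C(Y) = C(X) + 2 (c_n(Y) - c_n(X))`. -/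
theorem stmt2 (N : ℕ) (R : Type) [DecidableEq R]
    (S : Fin N → Fin N → ℝ)
    (hSnonneg : ∀ m n, 0 ≤ S m n) (hSdiag : ∀ n, S n n = 0)
    (hSsymm : ∀ m n, S m n = S n m)
    (Rn : Fin N → Set R) (hRn : ∀ n, (Rn n).Nonempty)
    (X Y : Fin N → R) (hX : ∀ n, X n ∈ Rn n)
    (n : Fin N) (r : R) (hr : r ∈ Rn n) (hne : r ≠ X n)
    (hY : Y = Function.update X n r)
    (himprove : cong S Y n < cong S X n) :
    totalCong S Y = totalCong S X + 2 * (cong S Y n - cong S X n) ∧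
      totalCong S Y < totalCong S X := by

  have hYm : ∀ m, m ≠ n → Y m = X m := by
    intro m hm; rw [hY]; simp [Function.update_of_ne hm]
  have key : totalCong S Y - totalCong S X = 2 * (cong S Y n - cong S X n) := by
    have hcong : ∀ (Z : Fin N → R) (p : Fin N),
        cong S Z p = ∑ m, if Z m = Z p then S m p else 0 := by
      intro Z p; rw [cong, Finset.sum_filter]
    have hdiff : totalCong S Y - totalCong S X
        = ∑ p, ∑ m, ((if Y m = Y p then S m p else 0)
            - (if X m = X p then S m p else 0)) := by
      rw [totalCong, totalCong, ← Finset.sum_sub_distrib]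
      simp only [hcong, ← Finset.sum_sub_distrib]
    rw [hdiff, ← Finset.sum_erase_add _ _ (Finset.mem_univ n)]
    have h1 : ∑ m, ((if Y m = Y n then S m n else 0)
        - (if X m = X n then S m n else 0)) = cong S Y n - cong S X n := by
      rw [Finset.sum_sub_distrib, ← hcong, ← hcong]
    have h2 : ∀ p ∈ univ.erase n,
        (∑ m, ((if Y m = Y p then S m p else 0)
            - (if X m = X p then S m p else 0)))
        = ((if Y n = Y p then S n p else 0) - (if X n = X p then S n p else 0)) := by
      intro p hp
      have hpn : p ≠ n := Finset.ne_of_mem_erase hp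
      apply Finset.sum_eq_single_of_mem n (Finset.mem_univ n)
      intro m _ hm
      rw [hYm m hm, hYm p hpn]
      ring
    rw [Finset.sum_congr rfl h2]
    have h3 : ∀ p, ((if Y n = Y p then S n p else 0) - (if X n = X p then S n p else 0))
        = ((if Y p = Y n then S p n else 0) - (if X p = X n then S p n else 0)) := by
      intro p
      rw [hSsymm n p]
      congr 1
      · exact if_congr eq_comm rfl rfl
      · exact if_congr eq_comm rfl rfl
    rw [Finset.sum_congr rfl (fun p _ => h3 p)]
    have h4 : ∑ p ∈ univ.erase n, ((if Y p = Y n then S p n else 0)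
        - (if X p = X n then S p n else 0)) = cong S Y n - cong S X n := by
      have := Finset.sum_erase_add univ (fun p => ((if Y p = Y n then S p n else 0)
        - (if X p = X n then S p n else 0))) (Finset.mem_univ n)
      have hn0 : ((if Y n = Y n then S n n else 0) - (if X n = X n then S n n else 0)) = 0 := by
        simp [hSdiag n]
      simp only at this
      rw [sub_self, add_zero] at this
      rw [this, Finset.sum_sub_distrib, ← hcong, ← hcong]
    rw [h4, h1]; ring
  constructor
  · linarith
  · linarith
end

section
/- Every GCGWE with homogeneous resources on an undirected graph (symmetric spatial matrix S) has the finite improvement property: every sequence of better response updates is finite, i.e., there is no infinite sequence of states X^0, X^1, X^2, ... in which each X^{t+1} results from X^t by a better response update of some player. -/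
open Finset

/-- The "edge set" of a state: the pairs of players sharing a resource. -/
def edgeSet {N : ℕ} {R : Type} [DecidableEq R]
    (Z : Fin N → R) : Finset (Fin N × Fin N) :=
  univ.filter (fun p => Z p.1 = Z p.2)

/-- The potential function. -/
def phi {N : ℕ} {R : Type} [DecidableEq R]
    (S : Fin N → Fin N → ℝ) (Z : Fin N → R) : ℝ :=
  ∑ p ∈ edgeSet Z, S p.1 p.2

lemma phi_eq {N : ℕ} {R : Type} [DecidableEq R]
    (S : Fin N → Fin N → ℝ) (Z : Fin N → R) :
    phi S Z = ∑ m, ∑ k, if Z m = Z k then S m k else 0 := by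
  rw [phi, edgeSet, sum_filter, Fintype.sum_prod_type]

lemma cong_eq {N : ℕ} {R : Type} [DecidableEq R]
    (S : Fin N → Fin N → ℝ) (Z : Fin N → R) (n : Fin N) :
    cong S Z n = ∑ k, if Z k = Z n then S k n else 0 := by
  rw [cong, sum_filter]

lemma phi_split {N : ℕ} {R : Type} [DecidableEq R]
    (S : Fin N → Fin N → ℝ) (hSdiag : ∀ n, S n n = 0)
    (hSsymm : ∀ m n, S m n = S n m)
    (Z : Fin N → R) (n : Fin N) :
    phi S Z = (∑ m ∈ univ.erase n, ∑ k ∈ univ.erase n,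
        if Z m = Z k then S m k else 0) + 2 * cong S Z n := by
  have hsym : ∀ m k : Fin N, (if Z m = Z k then S m k else 0)
      = (if Z k = Z m then S k m else 0) := by
    intro m k
    rw [hSsymm]
    simp [eq_comm]
  have hcong : cong S Z n
      = ∑ k ∈ univ.erase n, (if Z k = Z n then S k n else 0) := by
    rw [cong_eq, ← Finset.sum_erase_add _ _ (mem_univ n)]
    simp [hSdiag]
  rw [phi_eq]
  rw [← Finset.sum_erase_add _ _ (mem_univ n)]
  have hinner : ∀ m : Fin N, (∑ k, if Z m = Z k then S m k else 0)
      = (∑ k ∈ univ.erase n, if Z m = Z k then S m k else 0)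
        + (if Z m = Z n then S m n else 0) := by
    intro m
    rw [← Finset.sum_erase_add _ _ (mem_univ n)]
  rw [Finset.sum_congr rfl (fun m _ => hinner m), Finset.sum_add_distrib,
    hinner n]
  have h1 : (∑ m ∈ univ.erase n, if Z m = Z n then S m n else 0)
      = cong S Z n := by
    rw [hcong]
  have h2 : (∑ k ∈ univ.erase n, if Z n = Z k then S n k else 0)
      = cong S Z n := by
    rw [hcong]
    exact Finset.sum_congr rfl (fun k _ => hsym n k)
  simp only [if_pos rfl, hSdiag]
  rw [h1, h2]
  simp
  ring

lemma phi_update_lt {N : ℕ} {R : Type} [DecidableEq R]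
    (S : Fin N → Fin N → ℝ) (hSdiag : ∀ n, S n n = 0)
    (hSsymm : ∀ m n, S m n = S n m)
    (Z : Fin N → R) (n : Fin N) (r : R)
    (h : cong S (Function.update Z n r) n < cong S Z n) :
    phi S (Function.update Z n r) < phi S Z := by
  rw [phi_split S hSdiag hSsymm Z n,
    phi_split S hSdiag hSsymm (Function.update Z n r) n]
  have hA : (∑ m ∈ univ.erase n, ∑ k ∈ univ.erase n,
        if Function.update Z n r m = Function.update Z n r k then S m k else 0)
      = ∑ m ∈ univ.erase n, ∑ k ∈ univ.erase n,
        if Z m = Z k then S m k else 0 := by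
    refine Finset.sum_congr rfl (fun m hm => Finset.sum_congr rfl (fun k hk => ?_))
    rw [Function.update_of_ne (Finset.ne_of_mem_erase hm),
      Function.update_of_ne (Finset.ne_of_mem_erase hk)]
  rw [hA]
  linarith

/-- Every GCGWE with homogeneous resources on an undirected graph (symmetric
spatial matrix) has the finite improvement property: there is no infinite
sequence of states in which each state results from the previous one by a
better response update of some player. -/
theorem stmt3 (N : ℕ) (R : Type) [DecidableEq R]
    (S : Fin N → Fin N → ℝ)
    (hSnonneg : ∀ m n, 0 ≤ S m n) (hSdiag : ∀ n, S n n = 0)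
    (hSsymm : ∀ m n, S m n = S n m)
    (Rn : Fin N → Set R) (hRn : ∀ n, (Rn n).Nonempty)
    (f : Fin N → ℝ → ℝ) (hf : ∀ n, StrictAnti (f n)) :
    ¬ ∃ seq : ℕ → (Fin N → R),
        (∀ n, seq 0 n ∈ Rn n) ∧
        (∀ t, ∃ n, ∃ r ∈ Rn n,
          seq (t + 1) = Function.update (seq t) n r ∧
          f n (cong S (seq (t + 1)) n) > f n (cong S (seq t) n)) := by
  rintro ⟨seq, -, hstep⟩
  have hdec : StrictAnti (fun t => phi S (seq t)) := by
    apply strictAnti_nat_of_succ_lt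
    intro t
    obtain ⟨n, r, -, hupd, himp⟩ := hstep t
    have hc : cong S (seq (t + 1)) n < cong S (seq t) n :=
      ((hf n).lt_iff_gt).mp himp
    rw [hupd] at hc ⊢
    exact phi_update_lt S hSdiag hSsymm (seq t) n r hc
  have hginj : Function.Injective (fun t => edgeSet (seq t)) := by
    intro a b hab
    by_contra hne
    have : phi S (seq a) = phi S (seq b) := by
      simp only [phi]
      rw [show edgeSet (seq a) = edgeSet (seq b) from hab]
    exact absurd this (hdec.injective.ne hne)
  obtain ⟨a, b, hab, heq⟩ := Finite.exists_ne_map_eq_of_infinite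
    (fun t => edgeSet (seq t))
  exact hab (hginj heq)
end

section
/- In a GCGWE with homogeneous resources on an undirected graph (S symmetric), any state X that minimizes the total congestion C(X) = Σ_{n=1}^N Σ_{m: X_m = X_n} S_{m,n} over all states is a pure Nash equilibrium. -/
open Finset

/-- In a GCGWE with homogeneous resources on an undirected graph, any state
minimizing the total congestion over all states is a pure Nash equilibrium:
no single player can strictly decrease its own congestion level by
unilaterally changing its resource within its available set. -/
theorem stmt4 (N : ℕ) (R : Type) [DecidableEq R]
    (S : Fin N → Fin N → ℝ)
    (hSnonneg : ∀ m n, 0 ≤ S m n) (hSdiag : ∀ n, S n n = 0)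
    (hSsymm : ∀ m n, S m n = S n m)
    (Rn : Fin N → Set R) (hRn : ∀ n, (Rn n).Nonempty)
    (f : Fin N → ℝ → ℝ) (hf : ∀ n, StrictAnti (f n))
    (X : Fin N → R) (hX : ∀ n, X n ∈ Rn n)
    (hmin : ∀ Y : Fin N → R, (∀ n, Y n ∈ Rn n) →
      (∑ n, cong S X n) ≤ ∑ n, cong S Y n) :
    ∀ n, ∀ r ∈ Rn n, ¬ cong S (Function.update X n r) n < cong S X n := by
  intro n r hr hlt
  classical
  set Y := Function.update X n r with hYdef
  have hYn : Y n = r := Function.update_self n r X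
  have hYm : ∀ m : Fin N, m ≠ n → Y m = X m := fun m hm => Function.update_of_ne hm r X
  have hYmem : ∀ m, Y m ∈ Rn m := by
    intro m
    by_cases h : m = n
    · subst h; rw [hYn]; exact hr
    · rw [hYm m h]; exact hX m
  have hle := hmin Y hYmem
  have congite : ∀ (Z : Fin N → R) (m : Fin N),
      cong S Z m = ∑ k, if Z k = Z m then S k m else 0 := by
    intro Z m; rw [cong, sum_filter]
  have h1 : cong S Y n = ∑ m ∈ univ.erase n, (if X m = r then S m n else 0) := by
    rw [congite, ← Finset.sum_erase_add univ (fun k => if Y k = Y n then S k n else 0)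
      (mem_univ n)]
    simp only [hSdiag, if_pos rfl, if_true, add_zero]
    refine Finset.sum_congr rfl ?_
    intro m hm
    rw [hYm m (Finset.ne_of_mem_erase hm), hYn]
  have h2 : cong S X n = ∑ m ∈ univ.erase n, (if X m = X n then S m n else 0) := by
    rw [congite, ← Finset.sum_erase_add univ (fun k => if X k = X n then S k n else 0)
      (mem_univ n)]
    simp only [hSdiag, if_pos rfl, if_true, add_zero]
  have hD : ∀ m : Fin N, m ≠ n →
      cong S Y m - cong S X m
        = (if r = X m then S n m else 0) - (if X n = X m then S n m else 0) := by
    intro m hm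
    rw [congite, congite, ← Finset.sum_sub_distrib]
    rw [Finset.sum_eq_single n]
    · rw [hYn, hYm m hm]
    · intro k _ hk
      rw [hYm k hk, hYm m hm]
      ring
    · intro h; exact absurd (mem_univ n) h
  have htot : (∑ m, cong S Y m) - (∑ m, cong S X m)
      = 2 * (cong S Y n - cong S X n) := by
    rw [← Finset.sum_sub_distrib,
      ← Finset.sum_erase_add univ (fun m => cong S Y m - cong S X m) (mem_univ n)]
    have : ∑ m ∈ univ.erase n, (cong S Y m - cong S X m)
        = cong S Y n - cong S X n := by
      rw [h1, h2, ← Finset.sum_sub_distrib]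
      refine Finset.sum_congr rfl ?_
      intro m hm
      rw [hD m (Finset.ne_of_mem_erase hm), hSsymm n m]
      by_cases h : X m = r
      · simp [h, eq_comm]
      · have h' : ¬ (r = X m) := fun he => h he.symm
        simp [h, h', eq_comm]
    rw [this]; ring
  linarith
end

section
/- Let S be symmetric with zero diagonal, R = {1,2}, and for each player n let T_n ∈ ℝ be a fixed threshold such that a change by player n from resource 1 to resource 2 is a better response precisely when Σ_{m: X_m = 2} S_{m,n} < T_n, and a change from 2 to 1 is a better response precisely when Σ_{m: X_m = 2} S_{m,n} > T_n. Define V(X) = (1/2) Σ_{m,m'} S_{m',m}(X_m − 1)(X_{m'} − 1) − Σ_m T_m (X_m − 1) on states X ∈ {1,2}^N. Then whenever Y results from X by player n changing its resource, V(Y) = V(X) + (Y_n − X_n)((Σ_{m=1}^N S_{m,n}(X_m − 1)) − T_n); consequently V strictly decreases along every better response update. -/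
open Finset

noncomputable def potV {N : ℕ} (S : Fin N → Fin N → ℝ) (T : Fin N → ℝ)
    (Z : Fin N → ℕ) : ℝ :=
  (1 / 2) * (∑ m, ∑ m', S m' m * ((Z m : ℝ) - 1) * ((Z m' : ℝ) - 1)) -
    ∑ m, T m * ((Z m : ℝ) - 1)

/-- If `Y` results from `X` by player `n` changing its resource (in `{1,2}`),
then `V(Y) = V(X) + (Y_n − X_n)((Σ_m S_{m,n}(X_m − 1)) − T_n)`; consequently,
`V` strictly decreases along every better response update (as characterized by
the thresholds `T_n`). -/
theorem stmt8 (N : ℕ)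
    (S : Fin N → Fin N → ℝ)
    (hSnonneg : ∀ m n, 0 ≤ S m n) (hSdiag : ∀ n, S n n = 0)
    (hSsymm : ∀ m n, S m n = S n m)
    (T : Fin N → ℝ)
    (X Y : Fin N → ℕ)
    (hX : ∀ m, X m = 1 ∨ X m = 2) (hY : ∀ m, Y m = 1 ∨ Y m = 2)
    (n : Fin N) (hchange : Y n ≠ X n) (hothers : ∀ m, m ≠ n → Y m = X m) :
    potV S T Y = potV S T X +
        ((Y n : ℝ) - (X n : ℝ)) * ((∑ m, S m n * ((X m : ℝ) - 1)) - T n) ∧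
      (((X n = 1 ∧ Y n = 2 ∧
            (∑ m ∈ univ.filter (fun m => X m = 2), S m n) < T n) ∨
          (X n = 2 ∧ Y n = 1 ∧
            T n < ∑ m ∈ univ.filter (fun m => X m = 2), S m n)) →
        potV S T Y < potV S T X) := by
  set d : ℝ := (Y n : ℝ) - (X n : ℝ) with hd
  have hYX : ∀ m, ((Y m : ℝ) - 1) = ((X m : ℝ) - 1) + (if m = n then d else 0) := by
    intro m
    by_cases hm : m = n
    · subst hm; simp [hd]
    · simp [hm, hothers m hm]
  have key : ∑ m, ∑ m', S m' m * ((Y m : ℝ) - 1) * ((Y m' : ℝ) - 1)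
      = (∑ m, ∑ m', S m' m * ((X m : ℝ) - 1) * ((X m' : ℝ) - 1))
        + 2 * d * ∑ m, S m n * ((X m : ℝ) - 1) := by
    have step : ∑ m, ∑ m', S m' m * ((Y m : ℝ) - 1) * ((Y m' : ℝ) - 1)
        = ∑ m, ∑ m', (S m' m * ((X m : ℝ) - 1) * ((X m' : ℝ) - 1)
            + S m' m * ((X m : ℝ) - 1) * (if m' = n then d else 0)
            + S m' m * (if m = n then d else 0) * ((X m' : ℝ) - 1)
            + S m' m * (if m = n then d else 0) * (if m' = n then d else 0)) := by
      refine Finset.sum_congr rfl fun m _ => Finset.sum_congr rfl fun m' _ => ?_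
      rw [hYX m, hYX m']; ring
    rw [step]
    have e1 : ∀ m : Fin N, S n m = S m n := fun m => hSsymm n m
    simp only [mul_ite, ite_mul, mul_zero, zero_mul, Finset.sum_add_distrib,
      Finset.sum_ite_irrel, Finset.sum_const_zero, Finset.sum_ite_eq',
      Finset.mem_univ, if_true, hSdiag, e1]
    have hB : ∑ x, S x n * ((X x : ℝ) - 1) * d + ∑ x, S x n * d * ((X x : ℝ) - 1)
        = 2 * d * ∑ x, S x n * ((X x : ℝ) - 1) := by
      rw [Finset.mul_sum, ← Finset.sum_add_distrib]
      exact Finset.sum_congr rfl fun x _ => by ring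
    linarith [hB]
  have lin : ∑ m, T m * ((Y m : ℝ) - 1) = (∑ m, T m * ((X m : ℝ) - 1)) + T n * d := by
    have h2 : ∀ m : Fin N, T m * ((Y m : ℝ) - 1)
        = T m * ((X m : ℝ) - 1) + T m * (if m = n then d else 0) := fun m => by
      rw [hYX m]; ring
    simp only [h2, Finset.sum_add_distrib, mul_ite, mul_zero, Finset.sum_ite_eq',
      Finset.mem_univ, if_true]
  have part1 : potV S T Y = potV S T X + d * ((∑ m, S m n * ((X m : ℝ) - 1)) - T n) := by
    unfold potV; rw [key, lin]; ring
  refine ⟨part1, ?_⟩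
  intro hcase
  have hsum : ∑ m ∈ univ.filter (fun m => X m = 2), S m n
      = ∑ m, S m n * ((X m : ℝ) - 1) := by
    rw [Finset.sum_filter]
    refine Finset.sum_congr rfl fun m _ => ?_
    rcases hX m with h | h <;> simp [h] <;> ring
  rcases hcase with ⟨h1, h2, h3⟩ | ⟨h1, h2, h3⟩
  · have hd1 : d = 1 := by rw [hd, h1, h2]; norm_num
    rw [part1, hd1]; rw [hsum] at h3; linarith
  · have hd1 : d = -1 := by rw [hd, h1, h2]; norm_num
    rw [part1, hd1]; rw [hsum] at h3; linarith
end

section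
/- For every odd k ≥ 3 and any positive weights, the GCGWE on a directed cycle with k vertices, two resources available to all players, and payoffs f_n^r(x) = −x has no pure Nash equilibrium. That is, for any assignment X : {1,...,k} → {1,2}, some player n has X_{n} equal to the resource of its unique in-neighbor while the other resource would give it zero congestion, so n has a profitable deviation. -/
open Finset

/-- For every odd `k ≥ 3` and any positive weights, the GCGWE on a directed
cycle with `k` vertices (edges `i → i+1` of positive weight, all other entries
zero), two resources available to all players and payoffs `f(x) = -x`, has no
pure Nash equilibrium. -/
theorem stmt10 (k : ℕ) [NeZero k] (hk : 3 ≤ k) (hodd : Odd k)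
    (S : ZMod k → ZMod k → ℝ)
    (hedge : ∀ i : ZMod k, 0 < S i (i + 1))
    (hzero : ∀ i j : ZMod k, j ≠ i + 1 → S i j = 0) :
    ¬ ∃ X : ZMod k → Fin 2,
        ∀ (n : ZMod k) (r : Fin 2),
          ¬ (∑ m ∈ univ.filter (fun m => Function.update X n r m = r), S m n) <
              ∑ m ∈ univ.filter (fun m => X m = X n), S m n := by
  haveI : Fact (1 < k) := ⟨by omega⟩
  rintro ⟨X, hX⟩
  -- there is an edge with equal colors
  have hmono : ∃ n : ZMod k, X (n + 1) = X n := by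
    by_contra hne
    push_neg at hne
    open Fin.NatCast in
    have step : ∀ m : ℕ, X (m : ZMod k) = X 0 + (m : Fin 2) := by
      intro m
      induction m with
      | zero => simp
      | succ m ih =>
        have h1 : X ((m : ZMod k) + 1) = X (m : ZMod k) + 1 := by
          have := hne (m : ZMod k)
          revert this
          generalize X ((m : ZMod k) + 1) = a
          generalize X (m : ZMod k) = b
          revert a b; decide
        push_cast
        rw [h1, ih]; exact add_assoc _ _ _
    have hk0 : X ((k : ℕ) : ZMod k) = X 0 := by
      rw [ZMod.natCast_self]
    rw [step k] at hk0
    open Fin.NatCast in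
    have hcast : ((k : ℕ) : Fin 2) = 1 := by
      obtain ⟨j, hj⟩ := hodd
      subst hj
      push_cast
      simp
    rw [hcast] at hk0
    have : X 0 + 1 ≠ X 0 := by
      generalize X 0 = a; revert a; decide
    exact this hk0
  obtain ⟨n, hn⟩ := hmono
  set p := n + 1 with hp
  have hnp : n ≠ p := by
    intro h
    rw [hp] at h
    exact one_ne_zero (left_eq_add.mp h)
  have key : ∀ (Q : ZMod k → Prop) (_ : DecidablePred Q),
      ∑ m ∈ univ.filter Q, S m p = if Q n then S n p else 0 := by
    intro Q _
    rw [Finset.sum_filter]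
    rw [Finset.sum_eq_single n]
    · intro m _ hm
      have : S m p = 0 := by
        apply hzero
        rw [hp]
        intro h
        exact hm (by exact add_right_cancel h.symm ▸ rfl)
      simp [this]
    · intro h; exact absurd (Finset.mem_univ n) h
  set r : Fin 2 := X p + 1 with hr
  have hrne : r ≠ X p := by
    rw [hr]; generalize X p = a; revert a; decide
  have hold : ∑ m ∈ univ.filter (fun m => X m = X p), S m p = S n p := by
    exact (key (fun m => X m = X p) (by infer_instance)).trans (if_pos hn.symm)
  have hnew : ∑ m ∈ univ.filter (fun m => Function.update X p r m = r), S m p = 0 := by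
    refine (key (fun m => Function.update X p r m = r) (by infer_instance)).trans (if_neg ?_)
    rw [Function.update_of_ne hnp]
    exact fun h => hrne (hn.trans h).symm
  have := hX p r
  rw [hold, hnew] at this
  exact this (hedge n)
end

section
/- Let D(S) be a finite directed acyclic graph on players {1,...,N} and let k(1),...,k(N) be a topological ordering (if S_{k(j),k(i)} > 0 then i < j). Define the state X by sequentially letting each player k(u) choose a resource in R_{k(u)} maximizing its payoff given the choices already made by k(1),...,k(u−1) (players not yet assigned are ignored). Then X is a pure Nash equilibrium, because player k(u)'s congestion depends only on the choices of players k(1),...,k(u−1). -/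
open Finset

/-- Let `k` be a topological ordering of the players of a GCGWE whose positive
entries of `S` form a directed acyclic graph (an edge from `k i` to `k j`
implies `i < j`). If the state `X` is obtained by sequentially letting each
player `k u` choose a resource maximizing its payoff given the choices of
`k 1, …, k (u-1)`, then `X` is a pure Nash equilibrium. -/
theorem stmt11 (N : ℕ) (R : Type) [DecidableEq R]
    (S : Fin N → Fin N → ℝ)
    (hSnonneg : ∀ m n, 0 ≤ S m n) (hSdiag : ∀ n, S n n = 0)
    (Rn : Fin N → Set R) (hRn : ∀ n, (Rn n).Nonempty)
    (f : Fin N → R → ℝ → ℝ) (hf : ∀ n r, StrictAnti (f n r))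
    (k : Equiv.Perm (Fin N))
    (htopo : ∀ i j : Fin N, 0 < S (k i) (k j) → i < j)
    (X : Fin N → R) (hX : ∀ n, X n ∈ Rn n)
    (hgreedy : ∀ u : Fin N, ∀ r ∈ Rn (k u),
      f (k u) r (∑ i ∈ univ.filter (fun i => i < u ∧ X (k i) = r),
          S (k i) (k u)) ≤
        f (k u) (X (k u)) (∑ i ∈ univ.filter
          (fun i => i < u ∧ X (k i) = X (k u)), S (k i) (k u))) :
    ∀ n, ∀ r ∈ Rn n,
      f n r (∑ m ∈ univ.filter (fun m => m ≠ n ∧ X m = r), S m n) ≤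
        f n (X n) (∑ m ∈ univ.filter (fun m => X m = X n), S m n) := by
  intro n r hr
  set u : Fin N := k.symm n with hu
  have hn : n = k u := (k.apply_symm_apply n).symm
  -- key: congestion sums only depend on earlier players
  have key : ∀ (r' : R),
      (∑ m ∈ univ.filter (fun m => m ≠ n ∧ X m = r'), S m n)
        = ∑ i ∈ univ.filter (fun i => i < u ∧ X (k i) = r'), S (k i) (k u) := by
    intro r'
    rw [Finset.sum_filter, Finset.sum_filter, hn,
      ← Equiv.sum_comp k (fun m => if m ≠ k u ∧ X m = r' then S m (k u) else 0)]
    apply Finset.sum_congr rfl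
    intro i _
    rcases lt_trichotomy i u with h | h | h
    · have hne : k i ≠ k u := fun hc => absurd (k.injective hc) h.ne
      simp [hne, h]
    · subst h; simp [hSdiag]
    · have hS : S (k i) (k u) = 0 := by
        rcases (hSnonneg (k i) (k u)).eq_or_lt with h0 | h0
        · exact h0.symm
        · exact absurd (htopo i u h0) (not_lt.2 h.le)
      simp [hS, h.not_gt]
  have key2 : (∑ m ∈ univ.filter (fun m => X m = X n), S m n)
      = ∑ i ∈ univ.filter (fun i => i < u ∧ X (k i) = X (k u)), S (k i) (k u) := by
    have h1 : (∑ m ∈ univ.filter (fun m => X m = X n), S m n)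
        = ∑ m ∈ univ.filter (fun m => m ≠ n ∧ X m = X n), S m n := by
      rw [Finset.sum_filter, Finset.sum_filter]
      apply Finset.sum_congr rfl
      intro m _
      by_cases hm : m = n
      · subst hm; simp [hSdiag]
      · simp [hm]
    rw [h1, key (X n), hn]
  rw [key r, key2, hn]
  exact hgreedy u r (hn ▸ hr)
end

section
/- For a GCGWE with homogeneous resources on an undirected graph, if there exist states achieving total congestion zero, then a state X is a pure Nash equilibrium maximizing total payoff only if it is a proper coloring of the underlying graph; conversely, constructing the GCGWE with three homogeneous resources, S equal to the adjacency matrix of a graph G, and f_n(x) = −x, the graph G is properly 3-colorable if and only if the minimum over states X of the total congestion C(X) = Σ_n Σ_{m: X_m = X_n} S_{m,n} equals 0. -/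
open Finset

/-- (i) For a GCGWE with homogeneous resources on an undirected graph, if some
state achieves total congestion zero, then any pure Nash equilibrium maximizing
the total payoff is a proper coloring of the underlying graph (linked players
get distinct resources).  (ii) For the GCGWE with three homogeneous resources,
`S` equal to the adjacency matrix of a simple graph `G`, and payoffs
`f_n(x) = -x`, the graph `G` is properly 3-colorable iff the minimum of the
total congestion `C` over all states equals `0`. -/
theorem stmt12 :
    (∀ (N : ℕ) (R : Type) [DecidableEq R]
        (S : Fin N → Fin N → ℝ),
      (∀ m n, 0 ≤ S m n) → (∀ n, S n n = 0) → (∀ m n, S m n = S n m) →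
      ∀ (Rn : Fin N → Set R), (∀ n, (Rn n).Nonempty) →
      ∀ (f : Fin N → ℝ → ℝ), (∀ n, StrictAnti (f n)) →
      ∀ X0 : Fin N → R, (∀ n, X0 n ∈ Rn n) →
        (∑ n, cong S X0 n) = 0 →
      ∀ X : Fin N → R, (∀ n, X n ∈ Rn n) →
        -- X is a pure Nash equilibrium
        (∀ n, ∀ r ∈ Rn n,
          f n (cong S (Function.update X n r) n) ≤ f n (cong S X n)) →
        -- X maximizes the total payoff among pure Nash equilibria
        (∀ Y : Fin N → R, (∀ n, Y n ∈ Rn n) →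
          (∀ n, ∀ r ∈ Rn n,
            f n (cong S (Function.update Y n r) n) ≤ f n (cong S Y n)) →
          (∑ n, f n (cong S Y n)) ≤ ∑ n, f n (cong S X n)) →
        -- then X is a proper coloring of the underlying graph
        ∀ n m : Fin N, (0 < S n m ∨ 0 < S m n) → X n ≠ X m) ∧
    (∀ (V : Type) [Fintype V] [DecidableEq V]
        (G : SimpleGraph V) [DecidableRel G.Adj],
      G.Colorable 3 ↔
        IsLeast (Set.range (fun X : V → Fin 3 =>
          ∑ n, ∑ m ∈ univ.filter (fun m => X m = X n),
            (if G.Adj m n then (1 : ℝ) else 0))) 0) := by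
  constructor
  · intro N R _ S hS0 hdiag hsym Rn hRn f hf X0 hX0 hC0 X hX hNE hmax n m hpos heq
    have hcg : ∀ (Z : Fin N → R) (k : Fin N), 0 ≤ cong S Z k := fun Z k =>
      Finset.sum_nonneg (fun j _ => hS0 j k)
    have hX0z : ∀ k, cong S X0 k = 0 := by
      have := (Finset.sum_eq_zero_iff_of_nonneg (fun k _ => hcg X0 k)).mp hC0
      exact fun k => this k (mem_univ k)
    -- X0 is a Nash equilibrium
    have hNE0 : ∀ k, ∀ r ∈ Rn k,
        f k (cong S (Function.update X0 k r) k) ≤ f k (cong S X0 k) := by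
      intro k r _
      rw [hX0z k]
      exact (hf k).antitone (hcg _ k)
    have hmax0 := hmax X0 hX0 hNE0
    have hsum0 : (∑ k, f k (cong S X0 k)) = ∑ k, f k 0 := by
      apply Finset.sum_congr rfl; intro k _; rw [hX0z k]
    -- n ≠ m
    have hnm : n ≠ m := by
      rintro rfl
      rcases hpos with h | h <;> rw [hdiag] at h <;> exact lt_irrefl _ h
    have hSmn : 0 < S m n := by
      rcases hpos with h | h
      · rwa [hsym n m] at h
      · exact h
    have hmem : m ∈ univ.filter (fun j => X j = X n) := by
      simp [heq.symm]
    have hge : S m n ≤ cong S X n :=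
      Finset.single_le_sum (fun j _ => hS0 j n) hmem
    have hlt : f n (cong S X n) < f n 0 := hf n (lt_of_lt_of_le hSmn hge)
    have hsumlt : (∑ k, f k (cong S X k)) < ∑ k, f k 0 :=
      Finset.sum_lt_sum (fun k _ => (hf k).antitone (hcg X k))
        ⟨n, mem_univ n, hlt⟩
    rw [hsum0] at hmax0
    linarith
  · intro V _ _ G _
    constructor
    · rintro ⟨c⟩
      constructor
      · refine ⟨c, ?_⟩
        apply Finset.sum_eq_zero
        intro k _
        apply Finset.sum_eq_zero
        intro j hj
        simp only [mem_filter] at hj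
        rw [if_neg]
        intro hadj
        exact c.valid hadj hj.2
      · rintro x ⟨X, rfl⟩
        exact Finset.sum_nonneg fun k _ => Finset.sum_nonneg fun j _ => by positivity
    · rintro ⟨⟨X, hX0⟩, -⟩
      refine ⟨SimpleGraph.Coloring.mk X ?_⟩
      intro a b hadj hab
      have hinner : ∀ k, 0 ≤ ∑ j ∈ univ.filter (fun j => X j = X k),
          (if G.Adj j k then (1:ℝ) else 0) :=
        fun k => Finset.sum_nonneg fun j _ => by positivity
      have hb := (Finset.sum_eq_zero_iff_of_nonneg (fun k _ => hinner k)).mp hX0 b (mem_univ b)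
      have hterm := (Finset.sum_eq_zero_iff_of_nonneg
        (fun j _ => by positivity : ∀ j ∈ univ.filter (fun j => X j = X b),
          (0:ℝ) ≤ if G.Adj j b then 1 else 0)).mp hb a (by simp [hab])
      rw [if_pos hadj] at hterm
      norm_num at hterm
end

section
/- Consider players N = {1,...,N}, two resources, symmetric nonnegative S with zero diagonal, and suppose each player n has a threshold T_n such that switching resources is a better response for n in state X exactly when his current 'load' L_n(X) = Σ_{m=1}^N S_{m,n}(X_m − 1) satisfies L_n(X) < T_n and X_n = 1, or L_n(X) > T_n and X_n = 2. Then the dynamics cannot revisit any state: for any sequence of states X^0, X^1, ..., X^k (k ≥ 1) in which each consecutive pair differs by a better response update, X^k ≠ X^0. -/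
open Finset

/-- The 'load' of player `n` in state `X`: `L_n(X) = Σ_m S_{m,n}(X_m − 1)`. -/
def load {N : ℕ} (S : Fin N → Fin N → ℝ) (X : Fin N → ℕ) (n : Fin N) : ℝ :=
  ∑ m, S m n * ((X m : ℝ) - 1)

/-- A threshold better response update from `X` to `Y`: exactly one player `n`
switches, from 1 to 2 when `L_n(X) < T_n`, or from 2 to 1 when `L_n(X) > T_n`. -/
def ThresholdBR {N : ℕ} (S : Fin N → Fin N → ℝ) (T : Fin N → ℝ)
    (X Y : Fin N → ℕ) : Prop :=
  ∃ n : Fin N, (∀ m, m ≠ n → Y m = X m) ∧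
    ((X n = 1 ∧ Y n = 2 ∧ load S X n < T n) ∨
      (X n = 2 ∧ Y n = 1 ∧ T n < load S X n))

/-- The Rosenthal-type potential. -/
noncomputable def pot {N : ℕ} (S : Fin N → Fin N → ℝ) (T : Fin N → ℝ)
    (X : Fin N → ℕ) : ℝ :=
  (∑ m, ∑ m', S m' m * ((X m : ℝ) - 1) * ((X m' : ℝ) - 1)) / 2
    - ∑ m, T m * ((X m : ℝ) - 1)

lemma pot_diff {N : ℕ} (S : Fin N → Fin N → ℝ) (hSdiag : ∀ n, S n n = 0)
    (hSsymm : ∀ m n, S m n = S n m) (T : Fin N → ℝ)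
    (X Y : Fin N → ℕ) (n : Fin N) (h : ∀ m, m ≠ n → Y m = X m) :
    pot S T Y - pot S T X = ((Y n : ℝ) - (X n : ℝ)) * (load S X n - T n) := by
  have hlin : ∑ m, T m * ((Y m:ℝ) - 1) - ∑ m, T m * ((X m:ℝ) - 1)
      = T n * ((Y n:ℝ) - (X n:ℝ)) := by
    rw [← Finset.sum_sub_distrib, Finset.sum_eq_single n]
    · ring
    · intro m _ hm; rw [h m hm]; ring
    · simp
  have hquad : ∑ m, ∑ m', S m' m * ((Y m:ℝ) - 1) * ((Y m':ℝ) - 1)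
      - ∑ m, ∑ m', S m' m * ((X m:ℝ) - 1) * ((X m':ℝ) - 1)
      = 2 * (((Y n:ℝ) - (X n:ℝ)) * load S X n) := by
    have hsplit : ∀ m m' : Fin N,
        S m' m * ((Y m:ℝ) - 1) * ((Y m':ℝ) - 1)
          - S m' m * ((X m:ℝ) - 1) * ((X m':ℝ) - 1)
        = S m' m * ((Y m:ℝ) - (X m:ℝ)) * ((Y m':ℝ) - 1)
          + S m' m * ((X m:ℝ) - 1) * ((Y m':ℝ) - (X m':ℝ)) := by
      intro m m'; ring
    simp only [← Finset.sum_sub_distrib]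
    simp only [hsplit]
    simp only [Finset.sum_add_distrib]
    have hA : ∑ m, ∑ m', S m' m * ((Y m:ℝ) - (X m:ℝ)) * ((Y m':ℝ) - 1)
        = ((Y n:ℝ) - (X n:ℝ)) * load S X n := by
      rw [Finset.sum_eq_single n]
      · have : ∀ m' : Fin N, S m' n * ((Y n:ℝ) - (X n:ℝ)) * ((Y m':ℝ) - 1)
            = ((Y n:ℝ) - (X n:ℝ)) * (S m' n * ((X m':ℝ) - 1)) := by
          intro m'
          by_cases hm : m' = n
          · subst hm; rw [hSdiag]; ring
          · rw [h m' hm]; ring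
        rw [Finset.sum_congr rfl fun m' _ => this m', ← Finset.mul_sum]
        rfl
      · intro m _ hm
        rw [h m hm]
        simp
      · simp
    have hB : ∑ m, ∑ m', S m' m * ((X m:ℝ) - 1) * ((Y m':ℝ) - (X m':ℝ))
        = ((Y n:ℝ) - (X n:ℝ)) * load S X n := by
      rw [Finset.sum_comm, Finset.sum_eq_single n]
      · have : ∀ m : Fin N, S n m * ((X m:ℝ) - 1) * ((Y n:ℝ) - (X n:ℝ))
            = ((Y n:ℝ) - (X n:ℝ)) * (S m n * ((X m:ℝ) - 1)) := by
          intro m; rw [hSsymm n m]; ring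
        rw [Finset.sum_congr rfl fun m _ => this m, ← Finset.mul_sum]
        rfl
      · intro m' _ hm
        rw [h m' hm]
        simp
      · simp
    rw [hA, hB]
    ring
  have : pot S T Y - pot S T X
      = (∑ m, ∑ m', S m' m * ((Y m:ℝ) - 1) * ((Y m':ℝ) - 1)
          - ∑ m, ∑ m', S m' m * ((X m:ℝ) - 1) * ((X m':ℝ) - 1)) / 2
        - (∑ m, T m * ((Y m:ℝ) - 1) - ∑ m, T m * ((X m:ℝ) - 1)) := by
    simp only [pot]; ring
  rw [this, hlin, hquad]; ring

/-- With two resources, symmetric nonnegative `S` with zero diagonal, and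
threshold better-response dynamics, no state can ever be revisited: for any
sequence of states linked by better response updates, the final state differs
from the initial one. -/
theorem stmt15 (N : ℕ)
    (S : Fin N → Fin N → ℝ)
    (hSnonneg : ∀ m n, 0 ≤ S m n) (hSdiag : ∀ n, S n n = 0)
    (hSsymm : ∀ m n, S m n = S n m)
    (T : Fin N → ℝ)
    (seq : ℕ → (Fin N → ℕ))
    (hvals : ∀ t m, seq t m = 1 ∨ seq t m = 2)
    (k : ℕ) (hk : 1 ≤ k)
    (hstep : ∀ t < k, ThresholdBR S T (seq t) (seq (t + 1))) :
    seq k ≠ seq 0 := by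
  have hdec : ∀ t < k, pot S T (seq (t+1)) < pot S T (seq t) := by
    intro t ht
    obtain ⟨n, hoff, hcase⟩ := hstep t ht
    have hdiff := pot_diff S hSdiag hSsymm T (seq t) (seq (t+1)) n hoff
    rcases hcase with ⟨h1, h2, h3⟩ | ⟨h1, h2, h3⟩ <;>
      rw [h1, h2] at hdiff <;> push_cast at hdiff <;> nlinarith [hdiff]
  have key : ∀ t, 1 ≤ t → t ≤ k → pot S T (seq t) < pot S T (seq 0) := by
    intro t
    induction t with
    | zero => omega
    | succ t ih =>
      intro _ hle
      have hlt : t < k := by omega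
      have hd := hdec t hlt
      rcases Nat.eq_zero_or_pos t with h0 | h1
      · subst h0; simpa using hd
      · exact lt_trans hd (ih h1 (by omega))
  intro heq
  have := key k hk le_rfl
  rw [heq] at this
  exact lt_irrefl _ this
end
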